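/- Let n and α be positive integers with n ≥ 4α, and let G be the cycle graph on vertex set ZMod n (vertices i and i+1 adjacent for all i) with all edge costs equal to 1. Let U be a nonempty proper subset of ZMod n such that the number of edges with exactly one endpoint in U is 2α, and such that no vertex v has both of its neighbors v−1 and v+1 on the opposite side of the cut from v. Suppose S, T are disjoint nonempty subsets of ZMod n such that (U, ZMod n ∖ U) is the unique minimum (S,T)-terminal cut. Then S contains every vertex of U that is an endpoint of an edge crossing the cut, and T contains every vertex of ZMod n ∖ U that is an endpoint of an edge crossing the cut; in particular |S| ≥ 2α and |T| ≥ 2α. -/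

import Mathlib

open Finset

variable {V : Type*} [Fintype V] [DecidableEq V]

/- The value of the cut `(U, Uᶜ)`: total cost of edges with exactly one endpoint in `U`. -/
open Classical in
noncomputable def cutVal (G : SimpleGraph V) (c : V → V → ℝ) (U : Finset V) : ℝ :=
  ∑ u ∈ U, ∑ v ∈ Uᶜ, if G.Adj u v then c u v else 0

/-- `(X, Xᶜ)` is an `(S,T)`-terminal cut: `S ⊆ X ⊆ Tᶜ`. -/
def IsTerminalCut (S T X : Finset V) : Prop := S ⊆ X ∧ X ⊆ Tᶜ

/-- `(X, Xᶜ)` is a minimum `(S,T)`-terminal cut. -/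
def IsMinTerminalCut (G : SimpleGraph V) (c : V → V → ℝ) (S T X : Finset V) : Prop :=
  IsTerminalCut S T X ∧ ∀ Y : Finset V, IsTerminalCut S T Y → cutVal G c X ≤ cutVal G c Y

/-- `(X, Xᶜ)` is the unique minimum `(S,T)`-terminal cut. -/
def IsUniqueMinTerminalCut (G : SimpleGraph V) (c : V → V → ℝ) (S T X : Finset V) : Prop :=
  IsMinTerminalCut G c S T X ∧ ∀ Y : Finset V, IsMinTerminalCut G c S T Y → Y = X

/-- The cycle graph on ZMod n: i and i+1 are adjacent for every i. -/
def cycleGraph (n : ℕ) : SimpleGraph (ZMod n) where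
  Adj i j := i ≠ j ∧ (j = i + 1 ∨ i = j + 1)
  symm := by
    constructor
    intro i j h
    exact ⟨h.1.symm, h.2.symm⟩
  loopless := by
    constructor
    intro i h
    exact h.1 rfl

/-! On the cycle, a vertex `v` on the boundary of `U` has, by the hypothesis on `U`,
exactly one neighbour on each side, so moving `v` to the other side does not change the cut
value. If `v` were not a terminal, the moved cut would be another minimum terminal cut,
contradicting uniqueness. Passing to complements exchanges the roles of `S` and `T`, and the
cut value `2α` counts the boundary vertices on either side. -/

section TerminalCut

open Classical

variable {G : SimpleGraph V} {c : V → V → ℝ} {S T X : Finset V}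

theorem cutVal_compl (hc : ∀ u v, c u v = c v u) (X : Finset V) :
    cutVal G c Xᶜ = cutVal G c X := by
  rw [cutVal, cutVal, compl_compl, sum_comm]
  exact sum_congr rfl fun u _ => sum_congr rfl fun w _ => if_congr (G.adj_comm w u) (hc w u) rfl

theorem cutVal_erase {v : V} (hv : v ∈ X) :
    cutVal G c (X.erase v) = cutVal G c X - ∑ w ∈ Xᶜ, (if G.Adj v w then c v w else 0) +
      ∑ u ∈ X, (if G.Adj u v then c u v else 0) := by
  have hvc : v ∉ Xᶜ := by simpa using hv
  rw [cutVal, compl_erase, sum_congr rfl fun u _ => sum_insert hvc, sum_add_distrib,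
    sum_erase _ (by simp), sum_erase_eq_sub hv, cutVal]
  ring

theorem IsTerminalCut.compl (h : IsTerminalCut S T X) : IsTerminalCut T S Xᶜ :=
  ⟨subset_compl_comm.mp h.2, compl_subset_compl.mpr h.1⟩

theorem IsMinTerminalCut.compl (hc : ∀ u v, c u v = c v u) (h : IsMinTerminalCut G c S T X) :
    IsMinTerminalCut G c T S Xᶜ := by
  refine ⟨h.1.compl, fun Y hY => ?_⟩
  rw [cutVal_compl hc, ← cutVal_compl hc Y]
  exact h.2 _ hY.compl

theorem IsUniqueMinTerminalCut.compl (hc : ∀ u v, c u v = c v u)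
    (h : IsUniqueMinTerminalCut G c S T X) : IsUniqueMinTerminalCut G c T S Xᶜ :=
  ⟨h.1.compl hc, fun Y hY => by rw [← h.2 _ (hY.compl hc), compl_compl]⟩

theorem IsUniqueMinTerminalCut.mem_left_of_cutVal_erase_le (h : IsUniqueMinTerminalCut G c S T X)
    {v : V} (hv : v ∈ X) (hle : cutVal G c (X.erase v) ≤ cutVal G c X) : v ∈ S := by
  by_contra hvS
  have hcut : IsTerminalCut S T (X.erase v) :=
    ⟨fun x hx => mem_erase.mpr ⟨ne_of_mem_of_not_mem hx hvS, h.1.1.1 hx⟩,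
      (erase_subset v X).trans h.1.1.2⟩
  have hXv : X.erase v = X := h.2 _ ⟨hcut, fun Y hY => hle.trans (h.1.2 Y hY)⟩
  exact notMem_erase v X (by rwa [hXv])

end TerminalCut

section Cycle

open Classical

variable {n : ℕ} {S T X : Finset (ZMod n)}

theorem ZMod.natCast_ne_zero_of_pos_of_lt {k : ℕ} (hk : 0 < k) (hkn : k < n) :
    (k : ZMod n) ≠ 0 := by
  rw [Ne, ZMod.natCast_eq_zero_iff]
  exact fun hdvd => absurd (Nat.le_of_dvd hk hdvd) (by omega)

theorem cycleGraph_adj_iff (hn : 1 < n) {u v : ZMod n} :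
    (cycleGraph n).Adj u v ↔ v = u + 1 ∨ v = u - 1 := by
  have h1 : (1 : ZMod n) ≠ 0 := by exact_mod_cast ZMod.natCast_ne_zero_of_pos_of_lt one_pos hn
  constructor
  · rintro ⟨-, h | h⟩
    · exact Or.inl h
    · exact Or.inr (by rw [h]; ring)
  · rintro (rfl | rfl)
    · exact ⟨fun h => h1 (by linear_combination -h), Or.inl rfl⟩
    · exact ⟨fun h => h1 (by linear_combination h), Or.inr (by ring)⟩

theorem cycleGraph_sum_adj (hn : 2 < n) (v : ZMod n) (W : Finset (ZMod n)) :
    ∑ w ∈ W, (if (cycleGraph n).Adj v w then (1 : ℝ) else 0) =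
      (if v + 1 ∈ W then 1 else 0) + (if v - 1 ∈ W then 1 else 0) := by
  have h2 : (2 : ZMod n) ≠ 0 := by exact_mod_cast ZMod.natCast_ne_zero_of_pos_of_lt two_pos hn
  have hne : v + 1 ≠ v - 1 := fun h => h2 (by linear_combination h)
  have hsplit : ∀ w ∈ W, (if (cycleGraph n).Adj v w then (1 : ℝ) else 0) =
      (if w = v + 1 then 1 else 0) + (if w = v - 1 then 1 else 0) := by
    intro w _
    rw [if_congr (cycleGraph_adj_iff (by omega)) rfl rfl]
    by_cases ha : w = v + 1 <;> by_cases hb : w = v - 1 <;> simp_all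
  rw [sum_congr rfl hsplit, sum_add_distrib, sum_ite_eq' W (v + 1), sum_ite_eq' W (v - 1)]

theorem cutVal_cycleGraph [NeZero n] (hn : 2 < n) (hX : ∀ v ∈ X, v - 1 ∈ X ∨ v + 1 ∈ X) :
    cutVal (cycleGraph n) (fun _ _ => 1) X = #{v ∈ X | v - 1 ∉ X ∨ v + 1 ∉ X} := by
  rw [cutVal, ← sum_boole]
  refine sum_congr rfl fun v hv => ?_
  rw [cycleGraph_sum_adj hn]
  simp only [mem_compl]
  rcases hX v hv with h | h <;> by_cases h' : v + 1 ∈ X <;> by_cases h'' : v - 1 ∈ X <;> simp_all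

theorem cutVal_cycleGraph_erase [NeZero n] (hn : 2 < n) {v : ZMod n} (hv : v ∈ X)
    (hxor : Xor (v - 1 ∈ X) (v + 1 ∈ X)) :
    cutVal (cycleGraph n) (fun _ _ => 1) (X.erase v) = cutVal (cycleGraph n) (fun _ _ => 1) X := by
  rw [cutVal_erase hv, cycleGraph_sum_adj hn,
    sum_congr rfl fun u _ => if_congr ((cycleGraph n).adj_comm u v) rfl rfl,
    cycleGraph_sum_adj hn]
  simp only [mem_compl]
  rcases hxor with ⟨h, h'⟩ | ⟨h, h'⟩ <;> simp [h, h']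

theorem IsUniqueMinTerminalCut.cycleGraph_mem_left [NeZero n] (hn : 2 < n)
    (h : IsUniqueMinTerminalCut (cycleGraph n) (fun _ _ => 1) S T X)
    (hX : ∀ v ∈ X, v - 1 ∈ X ∨ v + 1 ∈ X) {v : ZMod n} (hv : v ∈ X)
    (hb : v - 1 ∉ X ∨ v + 1 ∉ X) : v ∈ S := by
  have hxor : Xor (v - 1 ∈ X) (v + 1 ∈ X) := by
    rw [xor_iff_or_and_not_and]
    exact ⟨hX v hv, not_and_or.mpr hb⟩
  exact h.mem_left_of_cutVal_erase_le hv (cutVal_cycleGraph_erase hn hv hxor).le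

theorem IsUniqueMinTerminalCut.cutVal_cycleGraph_le_card [NeZero n] (hn : 2 < n)
    (h : IsUniqueMinTerminalCut (cycleGraph n) (fun _ _ => 1) S T X)
    (hX : ∀ v ∈ X, v - 1 ∈ X ∨ v + 1 ∈ X) :
    cutVal (cycleGraph n) (fun _ _ => 1) X ≤ #S := by
  rw [cutVal_cycleGraph hn hX]
  exact_mod_cast card_le_card fun v hv =>
    h.cycleGraph_mem_left hn hX (mem_filter.1 hv).1 (mem_filter.1 hv).2

end Cycle

theorem cycle_tightness_general
    (n α : ℕ) [NeZero n] (hα : 0 < α) (hn : 4 * α ≤ n)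
    (U : Finset (ZMod n))
    (hd : cutVal (cycleGraph n) (fun _ _ => (1 : ℝ)) U = 2 * α)
    (hcomp : ∀ v : ZMod n, (v ∈ U → (v - 1 ∈ U ∨ v + 1 ∈ U)) ∧
      (v ∉ U → (v - 1 ∉ U ∨ v + 1 ∉ U)))
    (S T : Finset (ZMod n))
    (huniq : IsUniqueMinTerminalCut (cycleGraph n) (fun _ _ => (1 : ℝ)) S T U) :
    (∀ v ∈ U, (v - 1 ∉ U ∨ v + 1 ∉ U) → v ∈ S) ∧
    (∀ v ∈ Uᶜ, (v - 1 ∈ U ∨ v + 1 ∈ U) → v ∈ T) ∧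
    2 * α ≤ S.card ∧ 2 * α ≤ T.card := by
  have hn2 : 2 < n := by omega
  have hU : ∀ v ∈ U, v - 1 ∈ U ∨ v + 1 ∈ U := fun v => (hcomp v).1
  have hUc : ∀ v ∈ Uᶜ, v - 1 ∈ Uᶜ ∨ v + 1 ∈ Uᶜ := by
    simpa only [mem_compl] using fun v => (hcomp v).2
  have huniqc := huniq.compl fun _ _ => rfl
  have hdc : cutVal (cycleGraph n) (fun _ _ => (1 : ℝ)) Uᶜ = 2 * α :=
    (cutVal_compl (fun _ _ => rfl) U).trans hd
  refine ⟨fun v => huniq.cycleGraph_mem_left hn2 hU, fun v hv hb => ?_, ?_, ?_⟩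
  · exact huniqc.cycleGraph_mem_left hn2 hUc hv (by simpa only [mem_compl, not_not] using hb)
  · exact_mod_cast hd ▸ huniq.cutVal_cycleGraph_le_card hn2 hU
  · exact_mod_cast hdc ▸ huniqc.cutVal_cycleGraph_le_card hn2 hUc

/-- Tightness of the main theorem: in the n-cycle with unit costs, for a cut (U, Uᶜ) of
value 2α in which no vertex has both neighbors on the opposite side, the only way to
recover (U, Uᶜ) as the unique minimum (S,T)-terminal cut forces S (resp. T) to contain all
endpoints of crossing edges inside U (resp. Uᶜ); in particular |S|, |T| ≥ 2α. -/
theorem cycle_tightness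
    (n α : ℕ) [NeZero n] (hα : 0 < α) (hn : 4 * α ≤ n)
    (U : Finset (ZMod n)) (hUne : U.Nonempty) (hUp : U ≠ Finset.univ)
    (hd : cutVal (cycleGraph n) (fun _ _ => (1 : ℝ)) U = 2 * α)
    (hcomp : ∀ v : ZMod n, (v ∈ U → (v - 1 ∈ U ∨ v + 1 ∈ U)) ∧
      (v ∉ U → (v - 1 ∉ U ∨ v + 1 ∉ U)))
    (S T : Finset (ZMod n)) (hSne : S.Nonempty) (hTne : T.Nonempty) (hST : Disjoint S T)
    (huniq : IsUniqueMinTerminalCut (cycleGraph n) (fun _ _ => (1 : ℝ)) S T U) :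
    (∀ v ∈ U, (v - 1 ∉ U ∨ v + 1 ∉ U) → v ∈ S) ∧
    (∀ v ∈ Uᶜ, (v - 1 ∈ U ∨ v + 1 ∈ U) → v ∈ T) ∧
    2 * α ≤ S.card ∧ 2 * α ≤ T.card :=
  cycle_tightness_general n α hα hn U hd hcomp S T huniq
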